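/- Let $\Delta \in (0,1]$ and $\omega(w) = \zeta(w^{-2})^{-1/2}$ with $\zeta(z) = z - \Delta\frac{1}{\pi}(\sqrt{1-(1-2z)^2} - (1-2z)\arccos(1-2z))$. Then there exists a strictly decreasing function $\varepsilon : (1,\infty) \to (0,\infty)$ such that $\omega(w) = w + \Delta\frac{4}{3\pi} + \frac{3}{2}(\Delta\frac{4}{3\pi})^2 w^{-1} + \Delta\,\varepsilon(w)\, w^{-2}$ for all $w \in (1,\infty)$. -/

import Mathlib

open Real

/-- The squared cosine distance map. -/
noncomputable def zeta (Δ z : ℝ) : ℝ :=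
  z - Δ * (1 / π) *
    (Real.sqrt (1 - (1 - 2 * z) ^ 2) - (1 - 2 * z) * Real.arccos (1 - 2 * z))

/-- The inverse cosine distance map `ω(w) = ζ(w⁻²)^{-1/2}`. -/
noncomputable def omegaMap (Δ w : ℝ) : ℝ := (Real.sqrt (zeta Δ ((w ^ 2)⁻¹)))⁻¹

/-!
Put `s = w⁻¹`. Since `arccos (1 - 2s²) = 2 arcsin s`, one has `ζ(s²) = s² (1 - s x(s))`
with `x(s) = (2Δ/π) N(s)/s³` and `N(s) = s√(1 - s²) - (1 - 2s²) arcsin s`, `N' = 4s arcsin s`.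
Writing `(1 - T)^(-1/2) = 1 + T/2 + 3T²/8 + q(√(1 - T)) T³` with an explicit decreasing `q`,
and `N(s)/s³ = 4/3 + s² W(s)`, the remainder `ε(w)` becomes a sum of products of positive
functions of `s` that increase with `s`. The only transcendental input is the monotonicity of
`W = (N - 4s³/3)/s⁵`, which by the quotient rule and two rounds of "vanishes at `0`, positive
derivative" reduces to Huygens' inequality `3 arcsin s < tan (arcsin s) + 2s`. Monotonicity of
`N(s)/s³` up to `s = 1`, where it equals `π/2`, also gives `s x(s) < Δ ≤ 1`.
-/

open Set

lemma pos_of_hasDerivAt_pos {f f' : ℝ → ℝ} {a b x : ℝ}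
    (hd : ∀ y ∈ Ico a b, HasDerivAt f (f' y) y) (hf' : ∀ y ∈ Ioo a b, 0 < f' y)
    (ha : f a = 0) (hx : x ∈ Ioo a b) : 0 < f x := by
  have hmono : StrictMonoOn f (Ico a b) := by
    refine strictMonoOn_of_deriv_pos (convex_Ico a b)
      (fun y hy => (hd y hy).continuousAt.continuousWithinAt) fun y hy => ?_
    rw [interior_Ico] at hy
    rw [(hd y (Ioo_subset_Ico_self hy)).deriv]
    exact hf' y hy
  simpa [ha] using hmono (left_mem_Ico.2 (hx.1.trans hx.2)) (Ioo_subset_Ico_self hx) hx.1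

lemma strictMonoOn_div_pow {f f' : ℝ → ℝ} {D : Set ℝ} (n : ℕ) (hD : Convex ℝ D)
    (hD₀ : D ⊆ Ioi 0) (hc : ContinuousOn f D) (hd : ∀ x ∈ interior D, HasDerivAt f (f' x) x)
    (h : ∀ x ∈ interior D, n * f x < x * f' x) :
    StrictMonoOn (fun x => f x / x ^ n) D := by
  refine strictMonoOn_of_deriv_pos hD
    (hc.div (continuousOn_pow n) fun x hx => (pow_pos (hD₀ hx) n).ne') fun x hx => ?_
  have hx₀ : 0 < x := hD₀ (interior_subset hx)
  have hq : HasDerivAt (fun x => f x / x ^ n)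
      ((f' x * x ^ n - f x * (n * x ^ (n - 1))) / (x ^ n) ^ 2) x :=
    (hd x hx).div (hasDerivAt_pow n x) (pow_pos hx₀ n).ne'
  rw [hq.deriv]
  have hnum : x * (f' x * x ^ n - f x * (n * x ^ (n - 1))) = x ^ n * (x * f' x - n * f x) := by
    cases n with
    | zero => simp
    | succ k => simp only [Nat.add_sub_cancel, pow_succ]; push_cast; ring
  have : 0 < x * (f' x * x ^ n - f x * (n * x ^ (n - 1))) := by
    rw [hnum]; exact mul_pos (pow_pos hx₀ n) (sub_pos.2 (h x hx))
  exact div_pos (pos_of_mul_pos_right this hx₀.le) (by positivity)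

lemma hasDerivAt_sqrt_one_sub_sq {s : ℝ} (hs : s ∈ Ioo (-1) 1) :
    HasDerivAt (fun x => √(1 - x ^ 2)) (-s / √(1 - s ^ 2)) s := by
  have h := ((hasDerivAt_pow 2 s).const_sub 1).sqrt (by nlinarith [hs.1, hs.2])
  convert h using 1
  push_cast
  ring

lemma hasDerivAt_div_sqrt_one_sub_sq {s : ℝ} (hs : s ∈ Ioo (-1) 1) :
    HasDerivAt (fun x => x / √(1 - x ^ 2)) (1 / √(1 - s ^ 2) ^ 3) s := by
  have hR : 0 < √(1 - s ^ 2) := Real.sqrt_pos.2 (by nlinarith [hs.1, hs.2])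
  have hR2 : √(1 - s ^ 2) ^ 2 = 1 - s ^ 2 := Real.sq_sqrt (by nlinarith [hs.1, hs.2])
  refine ((hasDerivAt_id' s).div (hasDerivAt_sqrt_one_sub_sq hs) hR.ne').congr_deriv ?_
  field_simp
  rw [hR2]
  ring

lemma hasDerivAt_arcsin_of_mem {s : ℝ} (hs : s ∈ Ioo (-1) 1) :
    HasDerivAt arcsin (1 / √(1 - s ^ 2)) s :=
  hasDerivAt_arcsin hs.1.ne' hs.2.ne

lemma three_mul_arcsin_lt {s : ℝ} (hs : s ∈ Ioo 0 1) :
    3 * arcsin s < s / √(1 - s ^ 2) + 2 * s := by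
  refine sub_pos.1 (pos_of_hasDerivAt_pos (a := 0) (b := 1)
    (f := fun x => x / √(1 - x ^ 2) + 2 * x - 3 * arcsin x)
    (f' := fun x => 1 / √(1 - x ^ 2) ^ 3 + 2 - 3 * (1 / √(1 - x ^ 2))) (fun y hy => ?_)
    (fun y hy => ?_) (by simp) hs)
  · have hy : y ∈ Ioo (-1) 1 := ⟨by linarith [hy.1], hy.2⟩
    exact ((hasDerivAt_div_sqrt_one_sub_sq hy).add ((hasDerivAt_id y).const_mul 2)).sub
      ((hasDerivAt_arcsin_of_mem hy).const_mul 3) |>.congr_deriv (by simp)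
  · set R := √(1 - y ^ 2)
    have hR : 0 < R := Real.sqrt_pos.2 (by nlinarith [hy.1, hy.2])
    have hR1 : R < 1 := (Real.sqrt_lt' one_pos).2 (by nlinarith [hy.1])
    have : 1 / R ^ 3 + 2 - 3 * (1 / R) = (1 - R) ^ 2 * (1 + 2 * R) / R ^ 3 := by
      field_simp; ring
    rw [this]
    have : 0 < 1 - R := by linarith
    positivity

noncomputable def arcDefect (s : ℝ) : ℝ := s * √(1 - s ^ 2) - (1 - 2 * s ^ 2) * arcsin s

lemma arccos_one_sub_two_mul_sq {s : ℝ} (hs : s ∈ Icc 0 1) :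
    arccos (1 - 2 * s ^ 2) = 2 * arcsin s := by
  have hcos : cos (2 * arcsin s) = 1 - 2 * s ^ 2 := by
    rw [cos_two_mul, cos_arcsin, Real.sq_sqrt (by nlinarith [hs.1, hs.2])]
    ring
  rw [← hcos, arccos_cos (by linarith [arcsin_nonneg.2 hs.1])
    (by linarith [arcsin_le_pi_div_two s])]

lemma zeta_sq (Δ : ℝ) {s : ℝ} (hs : s ∈ Icc 0 1) :
    zeta Δ (s ^ 2) = s ^ 2 - 2 * Δ / π * arcDefect s := by
  have hsqrt : √(1 - (1 - 2 * s ^ 2) ^ 2) = 2 * s * √(1 - s ^ 2) := by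
    rw [show 1 - (1 - 2 * s ^ 2) ^ 2 = (2 * s) ^ 2 * (1 - s ^ 2) by ring,
      Real.sqrt_mul (by positivity), Real.sqrt_sq (by linarith [hs.1])]
  rw [zeta, hsqrt, arccos_one_sub_two_mul_sq hs, arcDefect]
  ring

lemma continuous_arcDefect : Continuous arcDefect := by
  unfold arcDefect
  fun_prop

lemma arcDefect_one : arcDefect 1 = π / 2 := by
  simp [arcDefect]
  ring

lemma hasDerivAt_arcDefect {s : ℝ} (hs : s ∈ Ioo (-1) 1) :
    HasDerivAt arcDefect (4 * s * arcsin s) s := by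
  have hR : 0 < √(1 - s ^ 2) := Real.sqrt_pos.2 (by nlinarith [hs.1, hs.2])
  have hR2 : √(1 - s ^ 2) ^ 2 = 1 - s ^ 2 := Real.sq_sqrt (by nlinarith [hs.1, hs.2])
  refine (((hasDerivAt_id' s).mul (hasDerivAt_sqrt_one_sub_sq hs)).sub
    (((hasDerivAt_pow 2 s).const_mul 2).const_sub 1 |>.mul (hasDerivAt_arcsin_of_mem hs)))
    |>.congr_deriv ?_
  field_simp
  rw [hR2]
  push_cast
  ring

noncomputable def arcDefectTail (s : ℝ) : ℝ := arcDefect s - 4 / 3 * s ^ 3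

lemma hasDerivAt_arcDefectTail {s : ℝ} (hs : s ∈ Ioo (-1) 1) :
    HasDerivAt arcDefectTail (4 * s * (arcsin s - s)) s :=
  ((hasDerivAt_arcDefect hs).sub ((hasDerivAt_pow 3 s).const_mul (4 / 3))).congr_deriv
    (by push_cast; ring)

lemma arcDefectTail_pos {s : ℝ} (hs : s ∈ Ioo 0 1) : 0 < arcDefectTail s := by
  refine pos_of_hasDerivAt_pos (fun y hy => hasDerivAt_arcDefectTail ⟨by linarith [hy.1], hy.2⟩)
    (fun y hy => ?_) (by simp [arcDefectTail, arcDefect]) hs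
  have hy' : y < arcsin y := by
    simpa [sin_arcsin (by linarith [hy.1]) hy.2.le] using sin_lt (arcsin_pos.2 hy.1)
  have := hy.1
  have : 0 < arcsin y - y := sub_pos.2 hy'
  positivity

lemma five_mul_arcDefectTail_lt {s : ℝ} (hs : s ∈ Ioo 0 1) :
    5 * arcDefectTail s < s * (4 * s * (arcsin s - s)) := by
  refine sub_pos.1 (pos_of_hasDerivAt_pos
    (f := fun x => x * (4 * x * (arcsin x - x)) - 5 * arcDefectTail x)
    (f' := fun x => 4 * x * (x / √(1 - x ^ 2) + 2 * x - 3 * arcsin x)) (fun y hy => ?_)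
    (fun y hy => ?_) (by simp [arcDefectTail, arcDefect]) hs)
  · have hy : y ∈ Ioo (-1) 1 := ⟨by linarith [hy.1], hy.2⟩
    have hR : 0 < √(1 - y ^ 2) := Real.sqrt_pos.2 (by nlinarith [hy.1, hy.2])
    refine (((hasDerivAt_id' y).mul (((hasDerivAt_id' y).const_mul 4).mul
      ((hasDerivAt_arcsin_of_mem hy).sub (hasDerivAt_id' y)))).sub
      ((hasDerivAt_arcDefectTail hy).const_mul 5)).congr_deriv ?_
    simp only [Pi.mul_apply, Pi.sub_apply]
    field_simp
    ring
  · have := three_mul_arcsin_lt hy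
    have := hy.1
    have : 0 < y / √(1 - y ^ 2) + 2 * y - 3 * arcsin y := by linarith
    positivity

lemma strictMonoOn_arcDefectTail_div :
    StrictMonoOn (fun s => arcDefectTail s / s ^ 5) (Ioc 0 1) := by
  refine strictMonoOn_div_pow 5 (convex_Ioc 0 1) Ioc_subset_Ioi_self
    (by unfold arcDefectTail; exact (continuous_arcDefect.sub (by fun_prop)).continuousOn)
    (f' := fun s => 4 * s * (arcsin s - s)) (fun x hx => ?_) (fun x hx => ?_)
  all_goals rw [interior_Ioc] at hx
  · exact hasDerivAt_arcDefectTail ⟨by linarith [hx.1], hx.2⟩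
  · exact_mod_cast five_mul_arcDefectTail_lt hx

lemma arcDefect_div_pow_three {s : ℝ} (hs : s ≠ 0) :
    arcDefect s / s ^ 3 = 4 / 3 + s ^ 2 * (arcDefectTail s / s ^ 5) := by
  unfold arcDefectTail
  field_simp
  ring

lemma strictMonoOn_arcDefect_div :
    StrictMonoOn (fun s => arcDefect s / s ^ 3) (Ioc 0 1) := by
  intro a ha b hb hab
  have hWa := arcDefectTail_pos ⟨ha.1, hab.trans_le hb.2⟩
  have := strictMonoOn_arcDefectTail_div ha hb hab
  simp only [arcDefect_div_pow_three ha.1.ne', arcDefect_div_pow_three hb.1.ne'] at this ⊢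
  have := ha.1
  gcongr

lemma arcDefect_div_pow_three_lt {s : ℝ} (hs : s ∈ Ioo 0 1) : arcDefect s / s ^ 3 < π / 2 := by
  simpa [arcDefect_one] using
    strictMonoOn_arcDefect_div ⟨hs.1, hs.2.le⟩ (right_mem_Ioc.2 one_pos) hs.2

noncomputable def defectSlope (Δ s : ℝ) : ℝ := 2 * Δ / π * (arcDefect s / s ^ 3)

lemma zeta_sq_eq_mul {Δ s : ℝ} (hs : s ∈ Ioo 0 1) :
    zeta Δ (s ^ 2) = s ^ 2 * (1 - s * defectSlope Δ s) := by
  rw [zeta_sq Δ ⟨hs.1.le, hs.2.le⟩, defectSlope]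
  have := hs.1.ne'
  field_simp

lemma mul_defectSlope_lt_one {Δ s : ℝ} (hΔ : Δ ∈ Ioc 0 1) (hs : s ∈ Ioo 0 1) :
    s * defectSlope Δ s < 1 := by
  have hV := arcDefect_div_pow_three_lt hs
  calc s * defectSlope Δ s < s * (2 * Δ / π * (π / 2)) := by
        unfold defectSlope; have := hΔ.1; have := hs.1; gcongr
    _ = Δ * s := by field_simp
    _ < 1 := by nlinarith [hΔ.1, hΔ.2, hs.1, hs.2]

lemma defectSlope_eq {Δ s : ℝ} (hs : s ≠ 0) :
    defectSlope Δ s =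
      2 * (Δ * (4 / (3 * π))) + 2 * Δ / π * s ^ 2 * (arcDefectTail s / s ^ 5) := by
  rw [defectSlope, arcDefect_div_pow_three hs]
  ring

lemma defectSlope_pos {Δ s : ℝ} (hΔ : 0 < Δ) (hs : s ∈ Ioo 0 1) : 0 < defectSlope Δ s := by
  have := arcDefectTail_pos hs
  have := hs.1
  rw [defectSlope_eq hs.1.ne']
  positivity

noncomputable def invRemCoeff (u : ℝ) : ℝ :=
  (3 / (u * (1 + u)) + 3 / (u * (1 + u) ^ 2) + 2 / (u * (1 + u) ^ 3)) / 8

-- Second-order Taylor expansion of `(1 - T)^(-1/2)` in `u = √(1 - T)`: the remainder is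
-- `(1 - u)³ (8 + 9u + 3u²) / (8u)` and `T³ = (1 - u)³ (1 + u)³`.
lemma inv_eq_taylor {u : ℝ} (hu : 0 < u) :
    u⁻¹ = 1 + (1 - u ^ 2) / 2 + 3 / 8 * (1 - u ^ 2) ^ 2 + invRemCoeff u * (1 - u ^ 2) ^ 3 := by
  unfold invRemCoeff
  field_simp
  ring

lemma invRemCoeff_nonneg {u : ℝ} (hu : 0 ≤ u) : 0 ≤ invRemCoeff u := by
  unfold invRemCoeff
  positivity

lemma strictAntiOn_invRemCoeff : StrictAntiOn invRemCoeff (Ioi 0) := by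
  intro a ha b hb hab
  have := ha.out
  unfold invRemCoeff
  gcongr

-- `Δ ε(w)` at `s = w⁻¹`: the first summand is what `x/2 + 3 s x²/8` leaves beyond
-- `α + 3 α² s / 2` (`α = 4Δ/(3π)`, `x - 2α = (2Δ/π) s² W`), the second the Taylor remainder.
noncomputable def epsCoeff (Δ s : ℝ) : ℝ :=
  Δ / π * (arcDefectTail s / s ^ 5) *
      (1 + 3 / 4 * s * (defectSlope Δ s + 2 * (Δ * (4 / (3 * π))))) +
    invRemCoeff √(1 - s * defectSlope Δ s) * defectSlope Δ s ^ 3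

lemma inv_sqrt_zeta_sq {Δ s : ℝ} (hΔ : Δ ∈ Ioc 0 1) (hs : s ∈ Ioo 0 1) :
    (√(zeta Δ (s ^ 2)))⁻¹ = s⁻¹ + Δ * (4 / (3 * π)) +
      3 / 2 * (Δ * (4 / (3 * π))) ^ 2 * s + s ^ 2 * epsCoeff Δ s := by
  set x := defectSlope Δ s with hx
  set u := √(1 - s * x) with hu
  have hu₀ : 0 < u := Real.sqrt_pos.2 (sub_pos.2 (mul_defectSlope_lt_one hΔ hs))
  have hu2 : u ^ 2 = 1 - s * x := Real.sq_sqrt (sub_pos.2 (mul_defectSlope_lt_one hΔ hs)).le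
  have htaylor := inv_eq_taylor hu₀
  rw [hu2, sub_sub_cancel] at htaylor
  rw [zeta_sq_eq_mul hs, Real.sqrt_mul (sq_nonneg s), Real.sqrt_sq hs.1.le, ← hu, mul_inv,
    htaylor, epsCoeff, ← hx, ← hu]
  have hs₀ := hs.1.ne'
  rw [hx, defectSlope_eq hs₀]
  field_simp
  ring

lemma epsCoeff_pos {Δ s : ℝ} (hΔ : 0 < Δ) (hs : s ∈ Ioo 0 1) : 0 < epsCoeff Δ s := by
  have := arcDefectTail_pos hs
  have := invRemCoeff_nonneg (Real.sqrt_nonneg (1 - s * defectSlope Δ s))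
  have := defectSlope_pos hΔ hs
  have := hs.1
  unfold epsCoeff
  positivity

lemma strictMonoOn_epsCoeff {Δ : ℝ} (hΔ : Δ ∈ Ioc 0 1) :
    StrictMonoOn (epsCoeff Δ) (Ioo 0 1) := by
  intro a ha b hb hab
  have hW := strictMonoOn_arcDefectTail_div ⟨ha.1, ha.2.le⟩ ⟨hb.1, hb.2.le⟩ hab
  have hxa := defectSlope_pos hΔ.1 ha
  have hx : defectSlope Δ a < defectSlope Δ b := by
    have := strictMonoOn_arcDefect_div ⟨ha.1, ha.2.le⟩ ⟨hb.1, hb.2.le⟩ hab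
    have := hΔ.1
    unfold defectSlope; gcongr
  have hq :
      invRemCoeff √(1 - a * defectSlope Δ a) < invRemCoeff √(1 - b * defectSlope Δ b) := by
    have hb₀ := sub_pos.2 (mul_defectSlope_lt_one hΔ hb)
    refine strictAntiOn_invRemCoeff (Real.sqrt_pos.2 hb₀)
      (Real.sqrt_pos.2 (sub_pos.2 (mul_defectSlope_lt_one hΔ ha))) (Real.sqrt_lt_sqrt hb₀.le ?_)
    have := ha.1
    gcongr
  have := arcDefectTail_pos ha
  have := invRemCoeff_nonneg (Real.sqrt_nonneg (1 - a * defectSlope Δ a))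
  have := ha.1
  have := hΔ.1
  unfold epsCoeff
  gcongr

/-- `ω(w) = w + Δ 4/(3π) + (3/2)(Δ 4/(3π))² w⁻¹ + Δ ε(w) w⁻²` with
`ε : (1,∞) → (0,∞)` strictly decreasing. -/
theorem omega_expansion (Δ : ℝ) (hΔ : Δ ∈ Set.Ioc (0 : ℝ) 1) :
    ∃ ε : ℝ → ℝ, StrictAntiOn ε (Set.Ioi (1 : ℝ)) ∧
      (∀ w ∈ Set.Ioi (1 : ℝ), 0 < ε w) ∧
      ∀ w ∈ Set.Ioi (1 : ℝ),
        omegaMap Δ w =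
          w + Δ * (4 / (3 * π)) + (3 / 2) * (Δ * (4 / (3 * π))) ^ 2 * w⁻¹ +
            Δ * ε w * (w ^ 2)⁻¹ := by
  have hinv : ∀ w ∈ Ioi (1 : ℝ), w⁻¹ ∈ Ioo (0 : ℝ) 1 :=
    fun w hw => ⟨inv_pos.2 (zero_lt_one.trans hw), inv_lt_one_of_one_lt₀ hw⟩
  refine ⟨fun w => epsCoeff Δ w⁻¹ / Δ, fun a ha b hb hab => ?_,
    fun w hw => div_pos (epsCoeff_pos hΔ.1 (hinv w hw)) hΔ.1, fun w hw => ?_⟩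
  · exact div_lt_div_of_pos_right (strictMonoOn_epsCoeff hΔ (hinv b hb) (hinv a ha)
      (inv_strictAntiOn (Ioi_subset_Ioi zero_le_one ha) (Ioi_subset_Ioi zero_le_one hb) hab)) hΔ.1
  · rw [omegaMap, ← inv_pow, inv_sqrt_zeta_sq hΔ (hinv w hw), inv_inv]
    have := hΔ.1.ne'
    field_simp
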